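/- Let x ∈ ℂ with x ≠ 0 not be an eigenvalue of Q₁, and let w ∈ ℂ satisfy w² = x. Let P be the 2N×2N diagonal matrix whose first N diagonal entries are (1+d_i^a)^{1/2} for i ≤ r and 1 for r < i ≤ N, and whose last N diagonal entries are (1+d_j^b)^{1/2} for j ≤ s and 1 for j > s. Then P·H(x)·P = [[0, w·Ŷ],[w·Ŷᴴ, 0]], and the determinant factorization det(P·H(x)·P − x·I_{2N}) = det(P)²·det(H(x) − x·I_{2N})·det(𝒟)·det(𝒟⁻¹ + x·𝐔ᴴ·G(x)·𝐔) holds. -/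

import Mathlib

open Matrix

noncomputable section

/-- Spiked diagonal entries: `â_k = a_k (1 + d_k)` for `k < r` (0-indexed) and
`â_k = a_k` otherwise. -/
def hatEntries (N r : ℕ) (a d : Fin N → ℝ) : Fin N → ℝ :=
  fun k => if (k : ℕ) < r then a k * (1 + d k) else a k

/-- The diagonal matrix `A^{1/2}` with entries `√(a_i)`. -/
def sqrtDiag (N : ℕ) (a : Fin N → ℝ) : Matrix (Fin N) (Fin N) ℂ :=
  Matrix.diagonal fun i => ((Real.sqrt (a i) : ℝ) : ℂ)

/-- `Y = A^{1/2} U B^{1/2}`. -/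
def Ymat (N : ℕ) (a b : Fin N → ℝ) (U : Matrix (Fin N) (Fin N) ℂ) :
    Matrix (Fin N) (Fin N) ℂ :=
  sqrtDiag N a * U * sqrtDiag N b

/-- The linearization `H(x) = [[0, w·Y],[w·Yᴴ, 0]]`, where `w² = x`. -/
def Hlin (N : ℕ) (Y : Matrix (Fin N) (Fin N) ℂ) (w : ℂ) :
    Matrix (Fin N ⊕ Fin N) (Fin N ⊕ Fin N) ℂ :=
  Matrix.fromBlocks 0 (w • Y) (w • Yᴴ) 0

/-- The `2N × (r+s)` matrix `𝐔` whose columns are `e₁,…,e_r` and `e_{N+1},…,e_{N+s}`. -/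
def Umat (N r s : ℕ) : Matrix (Fin N ⊕ Fin N) (Fin r ⊕ Fin s) ℂ :=
  Matrix.fromBlocks (fun i i' => if (i : ℕ) = (i' : ℕ) then 1 else 0) 0 0
    (fun j j' => if (j : ℕ) = (j' : ℕ) then 1 else 0)

/-- The `(r+s) × (r+s)` diagonal matrix `𝒟` with entries `d_i^a/(1+d_i^a)` and
`d_j^b/(1+d_j^b)`. -/
def Dmat (N r s : ℕ) (hr : r ≤ N) (hs : s ≤ N) (da db : Fin N → ℝ) :
    Matrix (Fin r ⊕ Fin s) (Fin r ⊕ Fin s) ℂ :=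
  Matrix.diagonal (Sum.elim
    (fun i : Fin r =>
      ((da (Fin.castLE hr i) / (1 + da (Fin.castLE hr i)) : ℝ) : ℂ))
    (fun j : Fin s =>
      ((db (Fin.castLE hs j) / (1 + db (Fin.castLE hs j)) : ℝ) : ℂ)))

/-- The `2N × 2N` diagonal matrix `P` with entries `(1+d_i^a)^{1/2}` (`i < r`), `1`
(`r ≤ i < N`), `(1+d_j^b)^{1/2}` (`j < s`), `1` (`s ≤ j < N`). -/
def Pmat (N r s : ℕ) (da db : Fin N → ℝ) :
    Matrix (Fin N ⊕ Fin N) (Fin N ⊕ Fin N) ℂ :=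
  Matrix.diagonal (Sum.elim
    (fun i : Fin N =>
      ((Real.sqrt (1 + if (i : ℕ) < r then da i else 0) : ℝ) : ℂ))
    (fun j : Fin N =>
      ((Real.sqrt (1 + if (j : ℕ) < s then db j else 0) : ℝ) : ℂ)))

/-- The `(r+s) × (r+s)` diagonal matrix `(I − 𝒟)^{1/2}` with entries `(1+d_i^a)^{-1/2}`
and `(1+d_j^b)^{-1/2}`. -/
def Emat (N r s : ℕ) (hr : r ≤ N) (hs : s ≤ N) (da db : Fin N → ℝ) :
    Matrix (Fin r ⊕ Fin s) (Fin r ⊕ Fin s) ℂ :=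
  Matrix.diagonal (Sum.elim
    (fun i : Fin r => (((Real.sqrt (1 + da (Fin.castLE hr i)))⁻¹ : ℝ) : ℂ))
    (fun j : Fin s => (((Real.sqrt (1 + db (Fin.castLE hs j)))⁻¹ : ℝ) : ℂ)))

/-! Since `P` is diagonal, `P·H(x)·P` is `H(x)` with `Y` replaced by `P_a·Y·P_b = Ŷ`.
Moreover `𝐔𝒟𝐔ᴴ = I − P⁻²`, so `P·H·P − x = P·(H − x + x·𝐔𝒟𝐔ᴴ)·P`, and the determinant of this
rank-`(r+s)` perturbation of `H − x` is given by the matrix determinant lemma. Finally `H − x` is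
invertible because its Schur complement is `Y·Yᴴ − x`. -/

namespace Matrix

variable {n k R : Type*} [Fintype n] [DecidableEq n] [Fintype k] [DecidableEq k]

theorem det_add_smul_mul_mul [Field R] {M : Matrix n n R} {D : Matrix k k R}
    (hM : IsUnit M.det) (hD : IsUnit D.det) (c : R) (U : Matrix n k R) (V : Matrix k n R) :
    (M + c • (U * D * V)).det = M.det * D.det * (D⁻¹ + c • (V * M⁻¹ * U)).det := by
  have hUDV : c • (U * D * V) = c • U * D * V := by rw [Matrix.smul_mul, Matrix.smul_mul]
  have hDV : 1 + D * (V * M⁻¹ * (c • U)) = D * (D⁻¹ + c • (V * M⁻¹ * U)) := by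
    rw [Matrix.mul_add, mul_nonsing_inv _ hD, Matrix.mul_smul]
  rw [hUDV, det_add_mul _ _ hM, ← Matrix.mul_assoc, det_one_add_mul_comm, hDV, det_mul, mul_assoc]

theorem mul_mul_sub_smul_one_eq [CommRing R] {P K : Matrix n n R} (hK : P * K * P = P * P - 1)
    (H : Matrix n n R) (x : R) :
    P * H * P - x • 1 = P * (H - x • 1 + x • K) * P := by
  simp only [Matrix.mul_add, Matrix.add_mul, Matrix.mul_sub, Matrix.sub_mul, Matrix.mul_smul,
    Matrix.smul_mul, hK, Matrix.mul_one, smul_sub]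
  abel

theorem det_sub_smul_one_ne_zero [Field R] {A : Matrix n n R} {x : R}
    (h : ∀ v, A *ᵥ v = x • v → v = 0) : (A - x • 1).det ≠ 0 := by
  intro hdet
  obtain ⟨v, hv0, hv⟩ := exists_mulVec_eq_zero_iff.mpr hdet
  rw [sub_mulVec, smul_mulVec, one_mulVec, sub_eq_zero] at hv
  exact hv0 (h v hv)

theorem fromBlocks_diagonal_mul_antidiagonal_mul {m : Type*} [Fintype m] [Semiring R]
    (A : Matrix n n R) (B : Matrix n m R) (C : Matrix m n R) (D : Matrix m m R) :
    fromBlocks A 0 0 D * fromBlocks 0 B C 0 * fromBlocks A 0 0 D =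
      fromBlocks 0 (A * B * D) (D * C * A) 0 := by
  simp [fromBlocks_multiply, Matrix.mul_assoc]

end Matrix

section Spike

variable {N : ℕ}

def spikeFactor (N r : ℕ) (d : Fin N → ℝ) : Fin N → ℝ :=
  fun i => 1 + if (i : ℕ) < r then d i else 0

theorem spikeFactor_pos {r : ℕ} {d : Fin N → ℝ} (hd : ∀ i : Fin N, (i : ℕ) < r → 0 < d i)
    (i : Fin N) : 0 < spikeFactor N r d i := by
  unfold spikeFactor
  split_ifs with h
  · linarith [hd i h]
  · norm_num

theorem hatEntries_eq_mul_spikeFactor (r : ℕ) (a d : Fin N → ℝ) :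
    hatEntries N r a d = a * spikeFactor N r d := by
  funext i
  simp only [hatEntries, spikeFactor, Pi.mul_apply]
  split_ifs <;> ring

theorem sqrtDiag_mul_sqrtDiag {a b : Fin N → ℝ} (hb : ∀ i, 0 ≤ b i) :
    sqrtDiag N a * sqrtDiag N b = sqrtDiag N (a * b) := by
  simp only [sqrtDiag, diagonal_mul_diagonal, Pi.mul_apply, Real.sqrt_mul' _ (hb _),
    Complex.ofReal_mul]

theorem sqrtDiag_commute (a b : Fin N → ℝ) : Commute (sqrtDiag N a) (sqrtDiag N b) := by
  simp only [Commute, SemiconjBy, sqrtDiag, diagonal_mul_diagonal, mul_comm]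

theorem sqrtDiag_conjTranspose (a : Fin N → ℝ) : (sqrtDiag N a)ᴴ = sqrtDiag N a := by
  simp [sqrtDiag, diagonal_conjTranspose]

theorem Ymat_mul_mul {a b p q : Fin N → ℝ} (hp : ∀ i, 0 ≤ p i) (hq : ∀ i, 0 ≤ q i)
    (U : Matrix (Fin N) (Fin N) ℂ) :
    Ymat N (a * p) (b * q) U = sqrtDiag N p * Ymat N a b U * sqrtDiag N q := by
  rw [Ymat, Ymat, ← sqrtDiag_mul_sqrtDiag hp, ← sqrtDiag_mul_sqrtDiag hq,
    (sqrtDiag_commute a p).eq]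
  simp only [Matrix.mul_assoc]

theorem Pmat_eq_fromBlocks (r s : ℕ) (da db : Fin N → ℝ) :
    Pmat N r s da db =
      fromBlocks (sqrtDiag N (spikeFactor N r da)) 0 0 (sqrtDiag N (spikeFactor N s db)) := by
  rw [sqrtDiag, sqrtDiag, fromBlocks_diagonal]
  rfl

theorem Pmat_mul_Hlin_mul_Pmat {r s : ℕ} {da db : Fin N → ℝ}
    (hda : ∀ i : Fin N, (i : ℕ) < r → 0 < da i) (hdb : ∀ j : Fin N, (j : ℕ) < s → 0 < db j)
    (a b : Fin N → ℝ) (U : Matrix (Fin N) (Fin N) ℂ) (w : ℂ) :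
    Pmat N r s da db * Hlin N (Ymat N a b U) w * Pmat N r s da db =
      Hlin N (Ymat N (hatEntries N r a da) (hatEntries N s b db) U) w := by
  rw [hatEntries_eq_mul_spikeFactor, hatEntries_eq_mul_spikeFactor,
    Ymat_mul_mul (fun i => (spikeFactor_pos hda i).le) (fun i => (spikeFactor_pos hdb i).le),
    Pmat_eq_fromBlocks, Hlin, Hlin, fromBlocks_diagonal_mul_antidiagonal_mul]
  simp only [conjTranspose_mul, sqrtDiag_conjTranspose, Matrix.mul_smul, Matrix.smul_mul,
    Matrix.mul_assoc]

end Spike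

section Perturbation

variable {N : ℕ}

def inclusionMatrix (N m : ℕ) : Matrix (Fin N) (Fin m) ℂ :=
  of fun i k => if (i : ℕ) = k then 1 else 0

theorem Umat_eq_fromBlocks (r s : ℕ) :
    Umat N r s = fromBlocks (inclusionMatrix N r) 0 0 (inclusionMatrix N s) :=
  rfl

theorem inclusionMatrix_mul_diagonal_mul_conjTranspose {m : ℕ} (hm : m ≤ N) (φ : Fin N → ℂ) :
    inclusionMatrix N m * diagonal (fun k => φ (Fin.castLE hm k)) * (inclusionMatrix N m)ᴴ =
      diagonal fun i : Fin N => if (i : ℕ) < m then φ i else 0 := by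
  ext i j
  rw [mul_apply]
  simp only [inclusionMatrix, mul_diagonal, conjTranspose_apply, of_apply, diagonal_apply]
  by_cases hi : (i : ℕ) < m
  · have hoff (k : Fin m) (hk : k ≠ ⟨i, hi⟩) : (i : ℕ) ≠ k := fun h => hk (Fin.ext h.symm)
    rw [Finset.sum_eq_single ⟨i, hi⟩ (fun k _ hk => by simp [hoff k hk]) (by simp)]
    by_cases hij : i = j
    · subst hij
      simp [hi, Fin.castLE]
    · simp [hij, Fin.val_ne_of_ne (Ne.symm hij)]
  · rw [Finset.sum_eq_zero (fun k _ => by simp [show (i : ℕ) ≠ k by omega])]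
    simp [hi]

theorem sqrtDiag_mul_perturbation_mul_sqrtDiag {m : ℕ} (hm : m ≤ N) {d : Fin N → ℝ}
    (hd : ∀ i : Fin N, (i : ℕ) < m → 0 < d i) :
    sqrtDiag N (spikeFactor N m d) *
        (inclusionMatrix N m *
          diagonal (fun k => ((d (Fin.castLE hm k) / (1 + d (Fin.castLE hm k)) : ℝ) : ℂ)) *
          (inclusionMatrix N m)ᴴ) *
        sqrtDiag N (spikeFactor N m d) =
      sqrtDiag N (spikeFactor N m d) * sqrtDiag N (spikeFactor N m d) - 1 := by
  rw [inclusionMatrix_mul_diagonal_mul_conjTranspose hm fun i => ((d i / (1 + d i) : ℝ) : ℂ),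
    sqrtDiag, diagonal_mul_diagonal, diagonal_mul_diagonal, diagonal_mul_diagonal,
    ← diagonal_one, diagonal_sub]
  congr 1
  funext i
  rw [mul_right_comm, ← Complex.ofReal_mul,
    Real.mul_self_sqrt (spikeFactor_pos hd i).le]
  unfold spikeFactor
  split_ifs with h
  · have : (1 + d i : ℂ) ≠ 0 := by exact_mod_cast (by linarith [hd i h] : (1 + d i) ≠ 0)
    push_cast
    field_simp
    ring
  · simp

theorem Pmat_mul_perturbation_mul_Pmat {r s : ℕ} (hr : r ≤ N) (hs : s ≤ N)
    {da db : Fin N → ℝ}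
    (hda : ∀ i : Fin N, (i : ℕ) < r → 0 < da i) (hdb : ∀ j : Fin N, (j : ℕ) < s → 0 < db j) :
    Pmat N r s da db * (Umat N r s * Dmat N r s hr hs da db * (Umat N r s)ᴴ) *
        Pmat N r s da db =
      Pmat N r s da db * Pmat N r s da db - 1 := by
  rw [Pmat_eq_fromBlocks, Umat_eq_fromBlocks, Dmat, ← fromBlocks_diagonal,
    fromBlocks_conjTranspose]
  simp only [fromBlocks_multiply, Matrix.mul_zero, Matrix.zero_mul, add_zero, zero_add,
    conjTranspose_zero]
  rw [sqrtDiag_mul_perturbation_mul_sqrtDiag hr hda,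
    sqrtDiag_mul_perturbation_mul_sqrtDiag hs hdb, ← fromBlocks_one]
  simp only [sub_eq_add_neg, fromBlocks_neg, fromBlocks_add, neg_zero, add_zero]

end Perturbation

theorem det_Hlin_sub_smul_one {N : ℕ} (Y : Matrix (Fin N) (Fin N) ℂ) {x w : ℂ} (hx : x ≠ 0)
    (hw : w ^ 2 = x) :
    (Hlin N Y w - x • 1).det = (-x) ^ N * (Y * Yᴴ - x • 1).det := by
  let _ : Invertible ((-x) • (1 : Matrix (Fin N) (Fin N) ℂ)) :=
    ⟨(-x)⁻¹ • 1, by simp [smul_smul, hx], by simp [smul_smul, hx]⟩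
  have hblocks : Hlin N Y w - x • 1 = fromBlocks ((-x) • 1) (w • Y) (w • Yᴴ) ((-x) • 1) := by
    rw [Hlin, ← fromBlocks_one, fromBlocks_smul, sub_eq_add_neg, fromBlocks_neg, fromBlocks_add]
    simp [neg_smul]
  have hschur : (-x) • (1 : Matrix (Fin N) (Fin N) ℂ) - w • Y * ⅟((-x) • 1) * w • Yᴴ =
      Y * Yᴴ - x • 1 := by
    have hw' : w * ((-x)⁻¹ * w) = -1 := by
      rw [← mul_assoc, mul_comm w, mul_assoc, ← sq, hw, inv_neg, neg_mul, inv_mul_cancel₀ hx]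
    rw [show ⅟((-x) • (1 : Matrix (Fin N) (Fin N) ℂ)) = (-x)⁻¹ • 1 from rfl]
    simp only [Matrix.smul_mul, Matrix.mul_smul, Matrix.mul_one, smul_smul, hw']
    rw [neg_smul, neg_smul, one_smul, sub_neg_eq_add, neg_add_eq_sub]
  rw [hblocks, det_fromBlocks₂₂, hschur, det_smul, det_one, mul_one, Fintype.card_fin]

theorem isUnit_det_Dmat {N r s : ℕ} (hr : r ≤ N) (hs : s ≤ N) {da db : Fin N → ℝ}
    (hda : ∀ i : Fin N, (i : ℕ) < r → 0 < da i) (hdb : ∀ j : Fin N, (j : ℕ) < s → 0 < db j) :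
    IsUnit (Dmat N r s hr hs da db).det := by
  rw [isUnit_iff_ne_zero, Dmat, det_diagonal, Finset.prod_ne_zero_iff]
  rintro (i | j) -
  · have := hda (Fin.castLE hr i) i.isLt
    simp only [Sum.elim_inl, ne_eq, Complex.ofReal_eq_zero]
    positivity
  · have := hdb (Fin.castLE hs j) j.isLt
    simp only [Sum.elim_inr, ne_eq, Complex.ofReal_eq_zero]
    positivity

theorem spiked_determinant_factorization_general (N r s : ℕ)
    (hr : r ≤ N) (hs : s ≤ N)
    (a b da db : Fin N → ℝ)
    (hda : ∀ i : Fin N, (i : ℕ) < r → 0 < da i)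
    (hdb : ∀ j : Fin N, (j : ℕ) < s → 0 < db j)
    (U : Matrix (Fin N) (Fin N) ℂ)
    (x w : ℂ) (hx : x ≠ 0) (hw : w ^ 2 = x)
    (hev : ∀ v : Fin N → ℂ,
      (Ymat N a b U * (Ymat N a b U)ᴴ) *ᵥ v = x • v → v = 0) :
    Pmat N r s da db * Hlin N (Ymat N a b U) w * Pmat N r s da db =
      Hlin N (Ymat N (hatEntries N r a da) (hatEntries N s b db) U) w ∧
    (Pmat N r s da db * Hlin N (Ymat N a b U) w * Pmat N r s da db -
        x • (1 : Matrix (Fin N ⊕ Fin N) (Fin N ⊕ Fin N) ℂ)).det =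
      (Pmat N r s da db).det ^ 2 *
        (Hlin N (Ymat N a b U) w -
          x • (1 : Matrix (Fin N ⊕ Fin N) (Fin N ⊕ Fin N) ℂ)).det *
        (Dmat N r s hr hs da db).det *
        ((Dmat N r s hr hs da db)⁻¹ +
          x • ((Umat N r s)ᴴ *
            (Hlin N (Ymat N a b U) w -
              x • (1 : Matrix (Fin N ⊕ Fin N) (Fin N ⊕ Fin N) ℂ))⁻¹ *
            Umat N r s)).det := by
  refine ⟨Pmat_mul_Hlin_mul_Pmat hda hdb a b U w, ?_⟩
  have hM : IsUnit (Hlin N (Ymat N a b U) w - x • 1).det := by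
    rw [isUnit_iff_ne_zero, det_Hlin_sub_smul_one _ hx hw]
    exact mul_ne_zero (pow_ne_zero _ (neg_ne_zero.2 hx)) (det_sub_smul_one_ne_zero hev)
  rw [mul_mul_sub_smul_one_eq (Pmat_mul_perturbation_mul_Pmat hr hs hda hdb), det_mul, det_mul,
    det_add_smul_mul_mul hM (isUnit_det_Dmat hr hs hda hdb)]
  ring

/-- `P·H(x)·P = [[0, w·Ŷ],[w·Ŷᴴ, 0]]` and
`det(P·H(x)·P − x·I) = det(P)²·det(H(x) − x·I)·det(𝒟)·det(𝒟⁻¹ + x·𝐔ᴴ·G(x)·𝐔)`. -/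
theorem spiked_determinant_factorization (N r s : ℕ)
    (hN : 0 < N) (hrpos : 0 < r) (hspos : 0 < s) (hr : r ≤ N) (hs : s ≤ N)
    (a b da db : Fin N → ℝ)
    (ha : ∀ i, 0 < a i) (hb : ∀ i, 0 < b i)
    (hda : ∀ i : Fin N, (i : ℕ) < r → 0 < da i)
    (hdb : ∀ j : Fin N, (j : ℕ) < s → 0 < db j)
    (U : Matrix (Fin N) (Fin N) ℂ) (hU : U ∈ Matrix.unitaryGroup (Fin N) ℂ)
    (x w : ℂ) (hx : x ≠ 0) (hw : w ^ 2 = x)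
    (hev : ∀ v : Fin N → ℂ,
      (Ymat N a b U * (Ymat N a b U)ᴴ) *ᵥ v = x • v → v = 0) :
    Pmat N r s da db * Hlin N (Ymat N a b U) w * Pmat N r s da db =
      Hlin N (Ymat N (hatEntries N r a da) (hatEntries N s b db) U) w ∧
    (Pmat N r s da db * Hlin N (Ymat N a b U) w * Pmat N r s da db -
        x • (1 : Matrix (Fin N ⊕ Fin N) (Fin N ⊕ Fin N) ℂ)).det =
      (Pmat N r s da db).det ^ 2 *
        (Hlin N (Ymat N a b U) w -
          x • (1 : Matrix (Fin N ⊕ Fin N) (Fin N ⊕ Fin N) ℂ)).det *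
        (Dmat N r s hr hs da db).det *
        ((Dmat N r s hr hs da db)⁻¹ +
          x • ((Umat N r s)ᴴ *
            (Hlin N (Ymat N a b U) w -
              x • (1 : Matrix (Fin N ⊕ Fin N) (Fin N ⊕ Fin N) ℂ))⁻¹ *
            Umat N r s)).det :=
  spiked_determinant_factorization_general N r s hr hs a b da db hda hdb U x w hx hw hev
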